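/- arXiv:1411.3567 — 6 statements merged into one kernel-verified Lean document; each statement's English description precedes it below -/
import Mathlib

section
/- Let Δ be a simplicial complex on {x_1,...,x_n}, Δ' its copy on {y_1,...,y_n}, and Δ^♯ the complex on {x_1,...,x_n,y_1,...,y_n} whose facets are {x_i : i ∈ F} ∪ {y_j : j ∉ F} for facets F of Δ. Then a set F = {y_j : j ∈ B} consisting only of y-vertices is a vertex cover of Δ^♯ if and only if F is not a face of Δ'. -/
open Finset Sum

theorem Finset.union_image_inl_inr_inter_image_inr_nonempty_iff {α β : Type*}
    [DecidableEq α] [DecidableEq β] (s : Finset α) (t B : Finset β) :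
    ((s.image inl ∪ t.image inr) ∩ B.image inr).Nonempty ↔ ∃ j ∈ B, j ∈ t := by
  constructor
  · rintro ⟨v, hv⟩
    simp only [mem_inter, mem_union, mem_image] at hv
    obtain ⟨⟨i, -, rfl⟩ | ⟨j, hj, rfl⟩, k, hk, hkj⟩ := hv
    · cases hkj
    · exact ⟨j, inr_injective hkj ▸ hk, hj⟩
  · rintro ⟨j, hjB, hjt⟩
    exact ⟨inr j, mem_inter.2 ⟨mem_union_right _ (mem_image_of_mem _ hjt),
      mem_image_of_mem _ hjB⟩⟩

theorem IsLowerSet.forall_not_le_iff_notMem {α : Type*} [Preorder α] {Δ : Set α}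
    (hΔ : IsLowerSet Δ) (b : α) : (∀ a ∈ Δ, ¬ b ≤ a) ↔ b ∉ Δ :=
  ⟨fun h hb => h b hb le_rfl, fun hb _ ha hba => hb (hΔ hba ha)⟩

/-- a set `{y_j : j ∈ B}` of y-vertices is a vertex cover of `Δ^♯`
(whose facets are the sets `sharp F`, `F ∈ Δ`) if and only if `B` is not a face of `Δ`
(i.e. the corresponding set of y-vertices is not a face of the copy `Δ'`). -/
theorem stmt2 (n : ℕ) (Δ : Set (Finset (Fin n)))
    (hΔ : ∀ F ∈ Δ, ∀ G ⊆ F, G ∈ Δ)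
    (sharp : Finset (Fin n) → Finset (Fin n ⊕ Fin n))
    (hsharp : ∀ F, sharp F = F.image Sum.inl ∪ Fᶜ.image Sum.inr)
    (B : Finset (Fin n)) :
    (∀ F ∈ Δ, (sharp F ∩ B.image Sum.inr).Nonempty) ↔ B ∉ Δ := by
  have hcover : ∀ F, (sharp F ∩ B.image Sum.inr).Nonempty ↔ ¬ B ⊆ F := fun F => by
    rw [hsharp, union_image_inl_inr_inter_image_inr_nonempty_iff, not_subset]
    simp only [mem_compl]
  simp only [hcover]
  exact IsLowerSet.forall_not_le_iff_notMem (fun F G hGF hF => hΔ F hF G hGF) B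
end

section
/- Let Δ be a simplicial complex on {x_1,...,x_n} and Δ^♯ the complex on {x_1,...,x_n,y_1,...,y_n} whose facets are {x_i : i ∈ F} ∪ {y_j : j ∉ F} for facets F of Δ. Then every minimal vertex cover of Δ^♯ is either of the form {x_i, y_i} for some i, or consists entirely of y-vertices and equals {y_j : j ∈ B} for a minimal nonface {x_j : j ∈ B} of Δ. -/
/-- every minimal vertex cover of `Δ^♯` (facets: `sharp F`, `F ∈ Δ`)
is either `{x_i, y_i}` for some `i`, or consists of y-vertices `{y_j : j ∈ B}`
for a minimal nonface `B` of `Δ`. -/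
theorem stmt3 (n : ℕ) (Δ : Set (Finset (Fin n)))
    (hΔ : ∀ F ∈ Δ, ∀ G ⊆ F, G ∈ Δ)
    (sharp : Finset (Fin n) → Finset (Fin n ⊕ Fin n))
    (hsharp : ∀ F, sharp F = F.image Sum.inl ∪ Fᶜ.image Sum.inr)
    (C : Finset (Fin n ⊕ Fin n))
    (hcov : ∀ F ∈ Δ, (sharp F ∩ C).Nonempty)
    (hmin : ∀ D ⊂ C, ¬ ∀ F ∈ Δ, (sharp F ∩ D).Nonempty) :
    (∃ i : Fin n, C = {Sum.inl i, Sum.inr i}) ∨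
    ∃ B : Finset (Fin n), C = B.image Sum.inr ∧ B ∉ Δ ∧ ∀ B' ⊂ B, B' ∈ Δ := by
  classical
  set B : Finset (Fin n) := Finset.univ.filter (fun j => Sum.inr j ∈ C) with hB
  by_cases hBΔ : B ∈ Δ
  · -- C contains some `inl i` with `i ∈ B`, and `{inl i, inr i}` is a cover.
    obtain ⟨a, ha⟩ := hcov B hBΔ
    rw [Finset.mem_inter, hsharp, Finset.mem_union] at ha
    obtain ⟨hs, hC⟩ := ha
    rcases hs with h | h
    · obtain ⟨i, hiB, rfl⟩ := Finset.mem_image.mp h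
      have hiC : Sum.inr i ∈ C := (Finset.mem_filter.mp hiB).2
      left
      refine ⟨i, ?_⟩
      have hsub : ({Sum.inl i, Sum.inr i} : Finset (Fin n ⊕ Fin n)) ⊆ C := by
        intro x hx
        simp only [Finset.mem_insert, Finset.mem_singleton] at hx
        rcases hx with rfl | rfl <;> assumption
      by_contra hne
      refine hmin _ ⟨hsub, fun h => hne (Finset.Subset.antisymm h hsub)⟩ ?_
      intro F hF
      by_cases hiF : i ∈ F
      · refine ⟨Sum.inl i, Finset.mem_inter.mpr ⟨?_, by simp⟩⟩
        rw [hsharp, Finset.mem_union]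
        exact Or.inl (Finset.mem_image.mpr ⟨i, hiF, rfl⟩)
      · refine ⟨Sum.inr i, Finset.mem_inter.mpr ⟨?_, by simp⟩⟩
        rw [hsharp, Finset.mem_union]
        exact Or.inr (Finset.mem_image.mpr ⟨i, by simpa using hiF, rfl⟩)
    · obtain ⟨j, hjB, rfl⟩ := Finset.mem_image.mp h
      have hj : j ∉ B := by simpa using hjB
      have hmem : j ∈ B := by rw [hB]; exact Finset.mem_filter.mpr ⟨Finset.mem_univ _, hC⟩
      exact absurd hmem hj
  · right
    have hcov' : ∀ B' : Finset (Fin n), B' ∉ Δ →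
        ∀ F ∈ Δ, (sharp F ∩ B'.image Sum.inr).Nonempty := by
      intro B' hB' F hF
      have hns : ¬ B' ⊆ F := fun h => hB' (hΔ F hF B' h)
      obtain ⟨j, hjB', hjF⟩ := Finset.not_subset.mp hns
      refine ⟨Sum.inr j, Finset.mem_inter.mpr ⟨?_, Finset.mem_image.mpr ⟨j, hjB', rfl⟩⟩⟩
      rw [hsharp, Finset.mem_union]
      exact Or.inr (Finset.mem_image.mpr ⟨j, by simpa using hjF, rfl⟩)
    have hsub : B.image Sum.inr ⊆ C := by
      intro x hx
      obtain ⟨j, hj, rfl⟩ := Finset.mem_image.mp hx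
      exact (Finset.mem_filter.mp hj).2
    have hCeq : C = B.image Sum.inr := by
      by_contra hne
      exact hmin _ ⟨hsub, fun h => hne (Finset.Subset.antisymm h hsub)⟩
        (hcov' B hBΔ)
    refine ⟨B, hCeq, hBΔ, ?_⟩
    intro B' hB'
    by_contra hB'Δ
    have hss : B'.image Sum.inr ⊂ C := by
      rw [hCeq]
      refine ⟨Finset.image_subset_image hB'.subset, fun h => hB'.ne' ?_⟩
      exact Finset.image_injective Sum.inr_injective
        (Finset.Subset.antisymm h (Finset.image_subset_image hB'.subset))
    exact hmin _ hss (hcov' B' hB'Δ)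
end

section
/- Let Δ be a simplicial complex on {x_1,...,x_n}. Order the monomials u_F (F ∈ Δ) by any total order such that u_G > u_F whenever G ⊊ F. Then the face ideal J_Δ = (u_F : F ∈ Δ) has linear quotients with respect to this order: for every F ∈ Δ, the colon ideal (u_G : G ∈ Δ, u_G > u_F) : u_F is generated by the variables y_j with F\{x_j} ∈ Δ and x_j ∈ F, i.e., by {y_j : x_j ∈ F}. -/
/-!
Since `G ⊊ F` forces `u_G > u_F`, every earlier generator `u_G` comes from a face with
`F ⊄ G`, so it is divisible by some `y_j` with `x_j ∈ F`. Hence the colon ideal lies in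
`(y_j : x_j ∈ F) : u_F`, which is `(y_j : x_j ∈ F)` itself because `u_F` involves no such `y_j`.
Conversely `y_j u_F = x_j u_{F \ {x_j}}` and `F \ {x_j}` is an earlier face.
-/

open MvPolynomial

namespace MvPolynomial

variable {R σ : Type*} [CommSemiring R]

theorem prod_X_eq_monomial (s : Finset σ) :
    ∏ x ∈ s, (X x : MvPolynomial σ R) = monomial (∑ x ∈ s, Finsupp.single x 1) 1 := by
  rw [monomial_sum_one]
  rfl

/-- Multiplication by the monomial shifts each exponent `m` of `p` to `m + d`, and `d` vanishes
on `t`. -/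
theorem colon_span_X_image_prod_X {t : Set σ} {s : Finset σ} (hst : Disjoint (s : Set σ) t) :
    (Ideal.span (X '' t) : Ideal (MvPolynomial σ R)).colon
        (Ideal.span {∏ x ∈ s, (X x : MvPolynomial σ R)}) =
      Ideal.span (X '' t) := by
  classical
  refine le_antisymm (fun p hp => ?_) Ideal.le_colon
  rw [Ideal.mem_colon_span_singleton, prod_X_eq_monomial, mem_ideal_span_X_image] at hp
  rw [mem_ideal_span_X_image]
  intro m hm
  set d : σ →₀ ℕ := ∑ x ∈ s, Finsupp.single x 1
  have hmd : m + d ∈ (p * monomial d 1).support := by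
    rwa [mem_support_iff, coeff_mul_monomial, mul_one, ← mem_support_iff]
  obtain ⟨i, hi, hne⟩ := hp _ hmd
  have hdi : d i = 0 := by
    have his : i ∉ s := Set.disjoint_right.mp hst hi
    simp [d, Finsupp.finsetSum_apply, Finsupp.single_apply, his]
  exact ⟨i, hi, by simpa [hdi] using hne⟩

end MvPolynomial

noncomputable section FaceMonomial

variable (R : Type*) [CommSemiring R] {σ : Type*} [Fintype σ] [DecidableEq σ]

/-- The monomial `u_F`, with `x_i = X (Sum.inl i)` and `y_j = X (Sum.inr j)`. -/
def faceMonomial (F : Finset σ) : MvPolynomial (σ ⊕ σ) R :=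
  (∏ i ∈ F, X (Sum.inl i)) * ∏ j ∈ Fᶜ, X (Sum.inr j)

variable {R}

theorem faceMonomial_eq_prod_X (F : Finset σ) :
    faceMonomial R F = ∏ x ∈ F.disjSum Fᶜ, X x :=
  (Finset.prod_disjSum F Fᶜ X).symm

theorem X_inr_dvd_faceMonomial {G : Finset σ} {j : σ} (hj : j ∉ G) :
    X (Sum.inr j) ∣ faceMonomial R G :=
  Dvd.dvd.mul_left (Finset.dvd_prod_of_mem _ (Finset.mem_compl.mpr hj)) _

theorem X_inr_mul_faceMonomial {F : Finset σ} {j : σ} (hj : j ∈ F) :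
    X (Sum.inr j) * faceMonomial R F = X (Sum.inl j) * faceMonomial R (F.erase j) := by
  rw [faceMonomial, faceMonomial, ← Finset.mul_prod_erase F _ hj, Finset.compl_erase,
    Finset.prod_insert (by simpa using hj)]
  ring

theorem faceMonomial_mem_span_X_inr {F G : Finset σ} (hFG : ¬ F ⊆ G) :
    faceMonomial R G ∈ Ideal.span (X '' (Sum.inr '' (F : Set σ))) := by
  obtain ⟨j, hjF, hjG⟩ := Finset.not_subset.mp hFG
  obtain ⟨q, hq⟩ := X_inr_dvd_faceMonomial (R := R) hjG
  rw [hq]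
  exact Ideal.mul_mem_right _ _ (Ideal.subset_span ⟨_, ⟨j, hjF, rfl⟩, rfl⟩)

theorem colon_span_X_inr_faceMonomial (F : Finset σ) :
    (Ideal.span (X '' (Sum.inr '' (F : Set σ))) : Ideal (MvPolynomial (σ ⊕ σ) R)).colon
        (Ideal.span {faceMonomial R F}) =
      Ideal.span (X '' (Sum.inr '' (F : Set σ))) := by
  rw [faceMonomial_eq_prod_X]
  refine colon_span_X_image_prod_X (Set.disjoint_right.mpr ?_)
  rintro _ ⟨j, hj, rfl⟩
  simpa using hj

end FaceMonomial

theorem stmt7_general (n : ℕ) (K : Type*) [Field K]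
    (Δ : Set (Finset (Fin n)))
    (hΔ : ∀ F ∈ Δ, ∀ G ⊆ F, G ∈ Δ)
    (u : Finset (Fin n) → MvPolynomial (Fin n ⊕ Fin n) K)
    (hu : ∀ F, u F = (∏ i ∈ F, X (Sum.inl i)) * ∏ j ∈ Fᶜ, X (Sum.inr j))
    (gt' : Finset (Fin n) → Finset (Fin n) → Prop)
    (hasymm : ∀ G F, gt' G F → ¬ gt' F G)
    (hrefine : ∀ G F : Finset (Fin n), G ⊂ F → gt' G F) :
    ∀ F ∈ Δ,
      (Ideal.span {p | ∃ G ∈ Δ, gt' G F ∧ p = u G}).colon (Ideal.span {u F}) =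
        Ideal.span {p | ∃ j ∈ F, p = X (Sum.inr j)} := by
  intro F hF
  obtain rfl : u = faceMonomial K := funext hu
  have hY : {p : MvPolynomial (Fin n ⊕ Fin n) K | ∃ j ∈ F, p = X (Sum.inr j)} =
      X '' (Sum.inr '' (F : Set (Fin n))) := by
    ext; simp [eq_comm]
  rw [hY]
  apply le_antisymm
  · refine (Submodule.colon_mono (Ideal.span_le.mpr ?_) le_rfl).trans
      (colon_span_X_inr_faceMonomial F).le
    rintro _ ⟨G, -, hGF, rfl⟩
    refine faceMonomial_mem_span_X_inr fun hFG => ?_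
    obtain rfl | hne := eq_or_ne F G
    · exact hasymm _ _ hGF hGF
    · exact hasymm _ _ hGF (hrefine F G (hFG.ssubset_of_ne hne))
  · rw [Ideal.span_le]
    rintro _ ⟨_, ⟨j, hj, rfl⟩, rfl⟩
    rw [SetLike.mem_coe, Ideal.mem_colon_span_singleton, X_inr_mul_faceMonomial hj]
    exact Ideal.mul_mem_left _ _ (Ideal.subset_span
      ⟨F.erase j, hΔ F hF _ (F.erase_subset j), hrefine _ _ (Finset.erase_ssubset hj), rfl⟩)

/-- the face ideal `J_Δ` has linear quotients: for any total order on faces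
with `u_G > u_F` whenever `G ⊊ F`, the colon ideal `(u_G : u_G > u_F) : u_F` is generated
by the variables `{y_j : x_j ∈ F}`. -/
theorem stmt7 (n : ℕ) (K : Type*) [Field K]
    (Δ : Set (Finset (Fin n)))
    (hΔ : ∀ F ∈ Δ, ∀ G ⊆ F, G ∈ Δ)
    (u : Finset (Fin n) → MvPolynomial (Fin n ⊕ Fin n) K)
    (hu : ∀ F, u F = (∏ i ∈ F, X (Sum.inl i)) * ∏ j ∈ Fᶜ, X (Sum.inr j))
    (gt' : Finset (Fin n) → Finset (Fin n) → Prop)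
    (hasymm : ∀ G F, gt' G F → ¬ gt' F G)
    (htrans : ∀ A B C, gt' A B → gt' B C → gt' A C)
    (htotal : ∀ G F, G ≠ F → gt' G F ∨ gt' F G)
    (hrefine : ∀ G F : Finset (Fin n), G ⊂ F → gt' G F) :
    ∀ F ∈ Δ,
      (Ideal.span {p | ∃ G ∈ Δ, gt' G F ∧ p = u G}).colon (Ideal.span {u F}) =
        Ideal.span {p | ∃ j ∈ F, p = X (Sum.inr j)} :=
  stmt7_general n K Δ hΔ u hu gt' hasymm hrefine
end

section
/- Let 𝒮 be a nonempty collection of subsets of {x_1,...,x_n} such that (i) F, G ∈ 𝒮 implies F ∩ G ∈ 𝒮, and (ii) for F, G ∈ 𝒮 with G ⊊ F there exists x_i ∈ F\G with F\{x_i} ∈ 𝒮. Fix a total order on the generators u_F (F ∈ 𝒮) refining reverse inclusion (u_G > u_F whenever G ⊊ F). Then for every F ∈ 𝒮, the colon ideal (u_G : u_G > u_F) : u_F equals the ideal generated by the variables {y_i : F\{x_i} ∈ 𝒮}; in particular, the ideal I_𝒮 = (u_F : F ∈ 𝒮) has linear quotients. -/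
open MvPolynomial

noncomputable def dd {n : ℕ} (F : Finset (Fin n)) : (Fin n ⊕ Fin n) →₀ ℕ :=
  (∑ i ∈ F, Finsupp.single (Sum.inl i) 1) + ∑ j ∈ Fᶜ, Finsupp.single (Sum.inr j) 1

lemma dd_inl {n : ℕ} (F : Finset (Fin n)) (i : Fin n) :
    dd F (Sum.inl i) = if i ∈ F then 1 else 0 := by
  simp [dd, Finsupp.finset_sum_apply, Finsupp.single_apply, Finset.sum_ite_eq']

lemma dd_inr {n : ℕ} (F : Finset (Fin n)) (j : Fin n) :
    dd F (Sum.inr j) = if j ∈ F then 0 else 1 := by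
  simp [dd, Finsupp.finset_sum_apply, Finsupp.single_apply, Finset.sum_ite_eq']

lemma u_eq {n : ℕ} (K : Type*) [Field K] (F : Finset (Fin n)) :
    ((∏ i ∈ F, X (Sum.inl i)) * ∏ j ∈ Fᶜ, X (Sum.inr j) : MvPolynomial (Fin n ⊕ Fin n) K)
      = monomial (dd F) 1 := by
  rw [dd, ← one_mul (1:K), ← monomial_mul, monomial_sum_one, monomial_sum_one]
  simp [X, mul_comm]

lemma key_add {n : ℕ} (F : Finset (Fin n)) (i : Fin n) (hi : i ∈ F) :
    Finsupp.single (Sum.inr i) 1 + dd F = Finsupp.single (Sum.inl i) 1 + dd (F.erase i) := by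
  ext s
  rcases s with j | j <;>
    simp only [Finsupp.add_apply, dd_inl, dd_inr, Finsupp.single_apply, Finset.mem_erase]
  · by_cases h : j = i
    · subst h; simp [hi]
    · simp [h, Ne.symm h]
  · by_cases h : j = i
    · subst h; simp [hi]
    · simp [h, Ne.symm h]

/-- for a collection `𝒮` closed under intersections and satisfying the
deletion condition (ii), the ideal `I_𝒮` has linear quotients: for any total order with
`u_G > u_F` whenever `G ⊊ F`, the colon ideal `(u_G : u_G > u_F) : u_F` equals the ideal
generated by the variables `{y_i : x_i ∈ F, F \ {x_i} ∈ 𝒮}`. -/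
theorem stmt8 (n : ℕ) (K : Type*) [Field K]
    (𝒮 : Set (Finset (Fin n))) (hne : 𝒮.Nonempty)
    (hi : ∀ F ∈ 𝒮, ∀ G ∈ 𝒮, F ∩ G ∈ 𝒮)
    (hii : ∀ F ∈ 𝒮, ∀ G ∈ 𝒮, G ⊂ F → ∃ i ∈ F \ G, F.erase i ∈ 𝒮)
    (u : Finset (Fin n) → MvPolynomial (Fin n ⊕ Fin n) K)
    (hu : ∀ F, u F = (∏ i ∈ F, X (Sum.inl i)) * ∏ j ∈ Fᶜ, X (Sum.inr j))
    (gt' : Finset (Fin n) → Finset (Fin n) → Prop)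
    (hasymm : ∀ G F, gt' G F → ¬ gt' F G)
    (htrans : ∀ A B C, gt' A B → gt' B C → gt' A C)
    (htotal : ∀ G F, G ≠ F → gt' G F ∨ gt' F G)
    (hrefine : ∀ G F : Finset (Fin n), G ⊂ F → gt' G F) :
    ∀ F ∈ 𝒮,
      (Ideal.span {p | ∃ G ∈ 𝒮, gt' G F ∧ p = u G}).colon (Ideal.span {u F}) =
        Ideal.span {p | ∃ i ∈ F, F.erase i ∈ 𝒮 ∧ p = X (Sum.inr i)} := by
  intro F hF
  have hum : ∀ G, u G = monomial (dd G) 1 := fun G => by rw [hu, u_eq]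
  -- rewrite the generating sets as images
  have hset1 : {p | ∃ G ∈ 𝒮, gt' G F ∧ p = u G} =
      (fun s => monomial s (1:K)) '' {s | ∃ G ∈ 𝒮, gt' G F ∧ s = dd G} := by
    ext p
    constructor
    · rintro ⟨G, hG, hgt, rfl⟩
      exact ⟨dd G, ⟨G, hG, hgt, rfl⟩, (hum G).symm⟩
    · rintro ⟨s, ⟨G, hG, hgt, rfl⟩, rfl⟩
      exact ⟨G, hG, hgt, (hum G).symm⟩
  have hset2 : {p : MvPolynomial (Fin n ⊕ Fin n) K | ∃ i ∈ F, F.erase i ∈ 𝒮 ∧ p = X (Sum.inr i)} =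
      X '' (Sum.inr '' {i | i ∈ F ∧ F.erase i ∈ 𝒮}) := by
    ext p
    constructor
    · rintro ⟨i, hiF, hFe, rfl⟩
      exact ⟨Sum.inr i, ⟨i, ⟨hiF, hFe⟩, rfl⟩, rfl⟩
    · rintro ⟨s, ⟨i, ⟨hiF, hFe⟩, rfl⟩, rfl⟩
      exact ⟨i, hiF, hFe, rfl⟩
  apply le_antisymm
  · -- colon ⊆ span of variables
    intro p hp
    rw [Ideal.mem_colon_span_singleton, hset1, MvPolynomial.mem_ideal_span_monomial_image] at hp
    rw [hset2, MvPolynomial.mem_ideal_span_X_image]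
    intro m hm
    -- m + dd F is in the support of p * u F
    have hmem : m + dd F ∈ (p * u F).support := by
      rw [MvPolynomial.mem_support_iff, hum F, MvPolynomial.coeff_mul_monomial, mul_one]
      exact MvPolynomial.mem_support_iff.mp hm
    obtain ⟨s, ⟨G, hG, hgt, rfl⟩, hle⟩ := hp _ hmem
    -- combinatorial lemma: find i ∈ F \ G with F.erase i ∈ 𝒮
    have hne' : G ≠ F := fun h => hasymm G F hgt (h ▸ hgt)
    have hnsub : ¬ F ⊆ G := by
      intro hFG
      exact hasymm G F hgt (hrefine F G (Finset.ssubset_iff_subset_ne.mpr ⟨hFG, Ne.symm hne'⟩))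
    have hH : F ∩ G ∈ 𝒮 := hi F hF G hG
    have hHF : F ∩ G ⊂ F := by
      rw [Finset.ssubset_iff_subset_ne]
      refine ⟨Finset.inter_subset_left, fun h => hnsub fun x hx => ?_⟩
      have : x ∈ F ∩ G := by rw [h]; exact hx
      exact (Finset.mem_inter.mp this).2
    obtain ⟨i, hiFH, hFe⟩ := hii F hF (F ∩ G) hH hHF
    rw [Finset.mem_sdiff, Finset.mem_inter] at hiFH
    obtain ⟨hiF, hiH⟩ := hiFH
    have hiG : i ∉ G := fun h => hiH ⟨hiF, h⟩
    refine ⟨Sum.inr i, ⟨i, ⟨hiF, hFe⟩, rfl⟩, ?_⟩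
    have := hle (Sum.inr i)
    rw [Finsupp.add_apply, dd_inr, dd_inr, if_neg hiG, if_pos hiF] at this
    omega
  · -- span of variables ⊆ colon
    rw [Ideal.span_le]
    rintro p ⟨i, hiF, hFe, rfl⟩
    rw [SetLike.mem_coe, Ideal.mem_colon_span_singleton]
    have heq : X (Sum.inr i) * u F = X (Sum.inl i) * u (F.erase i) := by
      rw [hum F, hum (F.erase i), X, X, monomial_mul, monomial_mul, one_mul, key_add F i hiF]
    rw [heq]
    exact Ideal.mul_mem_left _ _ (Ideal.subset_span
      ⟨F.erase i, hFe, hrefine _ _ (Finset.erase_ssubset hiF), rfl⟩)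
end

section
/- Let Γ be a simplicial complex on {x_1,...,x_n} and let W = W^{d_1,...,d_n}_{k_1,...,k_n}(Γ) be the higher dimensional whisker complex. If C satisfies (1) C ∩ {x_1,...,x_n} is a vertex cover of Γ, and (2) for each i, C ∩ {x_i, x_i^{(1)},...,x_i^{(k_i)}} is a minimal vertex cover of the d_i-skeleton of the simplex on {x_i, x_i^{(1)},...,x_i^{(k_i)}}, then C is a minimal vertex cover of W. -/
/-- 'if' direction: if `C ∩ {x_1,…,x_n}` covers `Γ` and each
`C ∩ {x_i, x_i^{(1)},…,x_i^{(k_i)}}` is a minimal vertex cover of the `d_i`-skeleton of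
the simplex on `{x_i, x_i^{(1)},…,x_i^{(k_i)}}`, then `C` is a minimal vertex cover of the
higher dimensional whisker complex `W^{d_1,…,d_n}_{k_1,…,k_n}(Γ)`. -/
theorem stmt15 (n : ℕ) (k d : Fin n → ℕ) (hd : ∀ i, 1 ≤ d i) (hdk : ∀ i, d i ≤ k i)
    (Γfacets : Set (Finset (Fin n)))
    (Si : Fin n → Finset (Fin n ⊕ ((i : Fin n) × Fin (k i))))
    (hSi : ∀ i, Si i =
      insert (Sum.inl i) (Finset.univ.image fun j : Fin (k i) => Sum.inr ⟨i, j⟩))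
    (WF : Set (Finset (Fin n ⊕ ((i : Fin n) × Fin (k i)))))
    (hWF : WF = {T | (∃ F ∈ Γfacets, T = F.image Sum.inl) ∨
        ∃ i : Fin n, T ⊆ Si i ∧ T.card = d i + 1})
    (C : Finset (Fin n ⊕ ((i : Fin n) × Fin (k i))))
    (h1 : ∀ F ∈ Γfacets, ∃ x ∈ F, Sum.inl x ∈ C)
    (h2 : ∀ i : Fin n,
      (∀ T ⊆ Si i, T.card = d i + 1 → (T ∩ (C ∩ Si i)).Nonempty) ∧
      ∀ D ⊂ C ∩ Si i, ¬ ∀ T ⊆ Si i, T.card = d i + 1 → (T ∩ D).Nonempty) :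
    (∀ T ∈ WF, (T ∩ C).Nonempty) ∧ ∀ D ⊂ C, ¬ ∀ T ∈ WF, (T ∩ D).Nonempty := by
  constructor
  · intro T hT
    rw [hWF] at hT
    rcases hT with ⟨F, hF, rfl⟩ | ⟨i, hTS, hTc⟩
    · obtain ⟨x, hx, hxC⟩ := h1 F hF
      exact ⟨Sum.inl x, Finset.mem_inter.2 ⟨Finset.mem_image_of_mem _ hx, hxC⟩⟩
    · obtain ⟨v, hv⟩ := (h2 i).1 T hTS hTc
      simp only [Finset.mem_inter] at hv
      exact ⟨v, Finset.mem_inter.2 ⟨hv.1, hv.2.1⟩⟩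
  · intro D hD hcov
    obtain ⟨v, hvC, hvD⟩ := Finset.exists_of_ssubset hD
    -- v belongs to Si i for some i
    have : ∃ i, v ∈ Si i := by
      rcases v with x | ⟨i, j⟩
      · exact ⟨x, by rw [hSi]; exact Finset.mem_insert_self _ _⟩
      · refine ⟨i, ?_⟩
        rw [hSi]
        exact Finset.mem_insert_of_mem (Finset.mem_image.2 ⟨j, Finset.mem_univ _, rfl⟩)
    obtain ⟨i, hvS⟩ := this
    have hss : D ∩ Si i ⊂ C ∩ Si i := by
      constructor
      · exact Finset.inter_subset_inter hD.subset le_rfl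
      · intro hsub
        exact hvD (Finset.mem_inter.1 (hsub (Finset.mem_inter.2 ⟨hvC, hvS⟩))).1
    refine (h2 i).2 _ hss ?_
    intro T hTS hTc
    have hT : T ∈ WF := by rw [hWF]; exact Or.inr ⟨i, hTS, hTc⟩
    obtain ⟨w, hw⟩ := hcov T hT
    simp only [Finset.mem_inter] at hw
    exact ⟨w, Finset.mem_inter.2 ⟨hw.1, Finset.mem_inter.2 ⟨hw.2, hTS hw.1⟩⟩⟩
end

section
/- Let Γ be a simplicial complex on {x_1,...,x_n} with all facets nonempty, and let W = W^{d_1,...,d_n}_{k_1,...,k_n}(Γ). Then every minimal vertex cover of W has the same cardinality, namely n + ∑_{i=1}^n (k_i − d_i); in particular all generators of the cover ideal of W have the same degree. -/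
/-- every minimal vertex cover of the higher dimensional whisker complex
`W^{d_1,…,d_n}_{k_1,…,k_n}(Γ)` has cardinality `n + ∑ (k_i - d_i)`. -/
theorem stmt16 (n : ℕ) (k d : Fin n → ℕ) (hd : ∀ i, 1 ≤ d i) (hdk : ∀ i, d i ≤ k i)
    (Γfacets : Set (Finset (Fin n))) (hΓ : ∀ F ∈ Γfacets, F.Nonempty)
    (Si : Fin n → Finset (Fin n ⊕ ((i : Fin n) × Fin (k i))))
    (hSi : ∀ i, Si i =
      insert (Sum.inl i) (Finset.univ.image fun j : Fin (k i) => Sum.inr ⟨i, j⟩))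
    (WF : Set (Finset (Fin n ⊕ ((i : Fin n) × Fin (k i)))))
    (hWF : WF = {T | (∃ F ∈ Γfacets, T = F.image Sum.inl) ∨
        ∃ i : Fin n, T ⊆ Si i ∧ T.card = d i + 1})
    (C : Finset (Fin n ⊕ ((i : Fin n) × Fin (k i))))
    (hcov : ∀ T ∈ WF, (T ∩ C).Nonempty)
    (hmin : ∀ D ⊂ C, ¬ ∀ T ∈ WF, (T ∩ D).Nonempty) :
    C.card = n + ∑ i : Fin n, (k i - d i) := by
  classical
  set f : (Fin n ⊕ ((i : Fin n) × Fin (k i))) → Fin n :=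
    Sum.elim id (fun p => p.1) with hf
  have hfib : ∀ (i : Fin n) v, v ∈ Si i ↔ f v = i := by
    intro i v
    rw [hSi]
    cases v with
    | inl a => simp [hf, eq_comm]
    | inr p =>
      obtain ⟨a, j⟩ := p
      simp only [Finset.mem_insert, Finset.mem_image, Finset.mem_univ, true_and, hf,
        Sum.elim_inr]
      constructor
      · rintro (h | ⟨j', h⟩)
        · exact absurd h (by simp)
        · obtain ⟨h1, -⟩ := Sigma.mk.inj_iff.mp (Sum.inr.inj h)
          exact h1.symm
      · rintro rfl
        exact Or.inr ⟨j, rfl⟩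
  have hScard : ∀ i, (Si i).card = k i + 1 := by
    intro i
    rw [hSi, Finset.card_insert_of_notMem (by simp),
      Finset.card_image_of_injective _ (fun a b h => by simpa using h)]
    simp
  -- lower bound on the fibers of C
  have hlow : ∀ i, k i + 1 - d i ≤ (C ∩ Si i).card := by
    intro i
    by_contra h
    push_neg at h
    have h1 : (Si i ∩ C).card + (Si i \ C).card = (Si i).card :=
      Finset.card_inter_add_card_sdiff _ _
    rw [Finset.inter_comm, hScard i] at h1
    have h2 : d i + 1 ≤ (Si i \ C).card := by
      have := hdk i
      omega
    obtain ⟨T, hTsub, hTcard⟩ := Finset.exists_subset_card_eq h2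
    have hTW : T ∈ WF := by
      rw [hWF]
      exact Or.inr ⟨i, hTsub.trans (Finset.sdiff_subset), hTcard⟩
    obtain ⟨w, hw⟩ := hcov T hTW
    rw [Finset.mem_inter] at hw
    exact (Finset.mem_sdiff.mp (hTsub hw.1)).2 hw.2
  -- upper bound on the fibers of C, via minimality
  have hupp : ∀ i, (C ∩ Si i).card ≤ k i + 1 - d i := by
    intro i
    by_contra h
    push_neg at h
    have h2 : ((C ∩ Si i).erase (Sum.inl i)).Nonempty := by
      rw [← Finset.card_pos]
      have := Finset.pred_card_le_card_erase (a := Sum.inl i) (s := C ∩ Si i)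
      have := hdk i
      omega
    obtain ⟨v, hv⟩ := h2
    rw [Finset.mem_erase, Finset.mem_inter] at hv
    obtain ⟨hvne, hvC, hvS⟩ := hv
    -- v is an inr vertex
    obtain ⟨j0, rfl⟩ : ∃ j0, v = Sum.inr ⟨i, j0⟩ := by
      cases v with
      | inl a =>
        exfalso
        apply hvne
        have := (hfib i (Sum.inl a)).mp hvS
        simp [hf] at this
        rw [this]
      | inr p =>
        have := (hfib i (Sum.inr p)).mp hvS
        simp [hf] at this
        obtain ⟨a, j⟩ := p
        simp only at this
        subst this
        exact ⟨j, rfl⟩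
    set v : Fin n ⊕ ((i : Fin n) × Fin (k i)) := Sum.inr ⟨i, j0⟩ with hvdef
    apply hmin (C.erase v) (Finset.erase_ssubset hvC)
    intro T hT
    have hTW := hT
    rw [hWF] at hT
    rcases hT with ⟨F, hF, rfl⟩ | ⟨i', hTs, hTc⟩
    · obtain ⟨w, hw⟩ := hcov _ hTW
      rw [Finset.mem_inter] at hw
      refine ⟨w, Finset.mem_inter.mpr ⟨hw.1, Finset.mem_erase.mpr ⟨?_, hw.2⟩⟩⟩
      obtain ⟨a, -, rfl⟩ := Finset.mem_image.mp hw.1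
      simp [hvdef]
    · by_cases hii : i' = i
      · subst hii
        -- counting argument
        by_contra hT'
        rw [Finset.not_nonempty_iff_eq_empty] at hT'
        have hDS : (C.erase v) ∩ Si i' = (C ∩ Si i').erase v := by
          ext x
          simp only [Finset.mem_inter, Finset.mem_erase]
          tauto
        have hDcard : ((C.erase v) ∩ Si i').card = (C ∩ Si i').card - 1 := by
          rw [hDS, Finset.card_erase_of_mem (Finset.mem_inter.mpr ⟨hvC, hvS⟩)]
        have hdisj : Disjoint T ((C.erase v) ∩ Si i') := by
          rw [Finset.disjoint_left]
          intro x hx hx'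
          have : x ∈ T ∩ (C.erase v) :=
            Finset.mem_inter.mpr ⟨hx, (Finset.mem_inter.mp hx').1⟩
          rw [hT'] at this
          exact absurd this (Finset.notMem_empty x)
        have hun : T ∪ ((C.erase v) ∩ Si i') ⊆ Si i' :=
          Finset.union_subset hTs (Finset.inter_subset_right)
        have hcard := Finset.card_le_card hun
        rw [Finset.card_union_of_disjoint hdisj, hTc, hDcard, hScard] at hcard
        have := hdk i'
        omega
      · obtain ⟨w, hw⟩ := hcov T hTW
        rw [Finset.mem_inter] at hw
        refine ⟨w, Finset.mem_inter.mpr ⟨hw.1, Finset.mem_erase.mpr ⟨?_, hw.2⟩⟩⟩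
        intro hwv
        have hw' := (hfib i' w).mp (hTs hw.1)
        rw [hwv] at hw'
        simp [hvdef, hf] at hw'
        exact hii hw'.symm
  -- put it together
  have hfibers : ∀ i, (C ∩ Si i).card = k i + 1 - d i :=
    fun i => le_antisymm (hupp i) (hlow i)
  have hsum : C.card = ∑ i : Fin n, (C ∩ Si i).card := by
    rw [Finset.card_eq_sum_card_fiberwise (f := f) (t := Finset.univ)
      (fun x _ => Finset.mem_univ _)]
    refine Finset.sum_congr rfl fun i _ => ?_
    congr 1
    ext x
    simp only [Finset.mem_filter, Finset.mem_inter, hfib]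
  rw [hsum]
  have : ∀ i : Fin n, (C ∩ Si i).card = (k i - d i) + 1 := by
    intro i
    rw [hfibers i]
    have := hdk i
    omega
  rw [Finset.sum_congr rfl fun i _ => this i, Finset.sum_add_distrib]
  simp [add_comm]
end
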